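/- Let p = (d_k, ..., d_0) be an (n,b)-palintiple with palinomial Pal(X), and let p̂ be an (n̂,b̂)-palintiple with palinomial Pal̂(X) that is either singly-ρ-derived from p (p̂ has k+2 digits and its carries satisfy ĉ_0 = 0 and ĉ_j = d_{k−j+1} for 1 ≤ j ≤ k+1) or doubly-ρ-derived from p (p̂ has k+3 digits and its carries satisfy ĉ_0 = 0, ĉ_j = d_{k−j+1} for 1 ≤ j ≤ k+1, and ĉ_{k+2} = 0). If p is a 1089 palintiple (symmetric with n+1 dividing b), then in ℤ[X]: (n−1)·(X−b)·Pal̂(X) = (X−b̂)·(d_0·X² − X + d_k)·Pal(X). If p is shifted-symmetric with carries c_0, ..., c_{k+1}, then in ℤ[X]: c_k·(X−b)·Pal̂(X) = (X−b̂)·(d_0·X + d_k)·Pal(X). -/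

import Mathlib

open Finset Polynomial

/-- `d 0, ..., d k` are the `k+1` digits (least significant first) of an
`(n,b)`-palintiple. -/
def IsPalintiple (n b : ℤ) (k : ℕ) (d : ℕ → ℤ) : Prop :=
  1 < n ∧ n < b ∧ 1 ≤ k ∧
  (∀ j ≤ k, 0 ≤ d j ∧ d j ≤ b - 1) ∧ d k ≠ 0 ∧ d 0 ≠ 0 ∧
  (∑ j ∈ range (k + 1), d j * b ^ j) = n * ∑ j ∈ range (k + 1), d (k - j) * b ^ j

/-- `c 0, ..., c (k+1)` are the carries of the `(n,b)`-palintiple with digits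
`d 0, ..., d k`. -/
def IsCarries (n b : ℤ) (k : ℕ) (d c : ℕ → ℤ) : Prop :=
  c 0 = 0 ∧ ∀ j ≤ k, n * d (k - j) + c j = d j + b * c (j + 1)

/-- A palintiple with carries `c` is symmetric if `c j = c (k-j)`. -/
def IsSym (k : ℕ) (c : ℕ → ℤ) : Prop := ∀ j ≤ k, c j = c (k - j)

/-- A palintiple with carries `c` is shifted-symmetric if `c j = c (k-j+1)`. -/
def IsShiftedSym (k : ℕ) (c : ℕ → ℤ) : Prop := ∀ j ≤ k, c j = c (k - j + 1)

/-- A palintiple is asymmetric if it is neither symmetric nor shifted-symmetric. -/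
def IsAsym (k : ℕ) (c : ℕ → ℤ) : Prop := ¬ IsSym k c ∧ ¬ IsShiftedSym k c

/-- The palinomial of the `(n,b)`-palintiple with digits `d 0, ..., d k`. -/
noncomputable def palinomial (n : ℤ) (k : ℕ) (d : ℕ → ℤ) : Polynomial ℤ :=
  ∑ j ∈ Finset.range (k + 1), Polynomial.C (d j - n * d (k - j)) * Polynomial.X ^ j

/-- The digit polynomial of the palintiple with digits `d 0, ..., d k`. -/
noncomputable def digitPoly (k : ℕ) (d : ℕ → ℤ) : Polynomial ℤ :=
  ∑ j ∈ Finset.range (k + 1), Polynomial.C (d j) * Polynomial.X ^ j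

/-- The reverse-digit polynomial of the palintiple with digits `d 0, ..., d k`. -/
noncomputable def revDigitPoly (k : ℕ) (d : ℕ → ℤ) : Polynomial ℤ :=
  ∑ j ∈ Finset.range (k + 1), Polynomial.C (d (k - j)) * Polynomial.X ^ j

/-!
With `Q(X) = ∑_{j<k} c_{j+1} X^j` (the carry polynomial divided by `X`), the carry relations say
exactly `Pal(X) = (X - b) Q(X)`. The carries of a ρ-derived `p̂` are the reversed digits of `p`,
so likewise `Pal̂(X) = (X - b̂) Rev(X)`, where `Rev` is the reversed-digit polynomial of `p`.

Adding `n` times the carry relation at `j` to the one at `k - j` and using the symmetry of the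
carries gives `(n² - 1) Rev = (b X² - (n + 1) X + n b) Q` in the symmetric case and
`(n² - 1) Rev = ((b - n) X + n b - 1) Q` in the shifted-symmetric case. In the latter, the
relations at `j = 0, k` show that the linear factor is `(n² - 1) / c_k` times `d₀ X + d_k`.
In the 1089 case write `b = (n + 1) m`; then `(n - 1) Rev = (m X² - X + n m) Q`, the quadratic
is primitive, and Gauss's lemma gives `n - 1 ∣ c₁`. Since `0 < c₁ < n`, this forces `c₁ = n - 1`
and hence `m = d₀`, `d_k = n d₀`.
-/

theorem Polynomial.IsPrimitive.C_dvd_of_C_dvd_mul {R : Type*} [CommRing R]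
    [StrongNormalizedGCDMonoid R] {f g : R[X]} {r : R} (hf : f.IsPrimitive)
    (h : C r ∣ f * g) : C r ∣ g := by
  rwa [← dvd_content_iff_C_dvd, content_mul, hf.content_eq_one, one_mul,
    dvd_content_iff_C_dvd] at h

section CarryPoly

variable {R : Type*} [CommRing R]

noncomputable def carryPoly (k : ℕ) (c : ℕ → R) : R[X] :=
  ∑ j ∈ range k, C (c (j + 1)) * X ^ j

variable {k : ℕ} {c : ℕ → R}

theorem carryPoly_eq_sum_range_succ (htop : c (k + 1) = 0) :
    carryPoly k c = ∑ j ∈ range (k + 1), C (c (j + 1)) * X ^ j := by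
  simp [carryPoly, sum_range_succ, htop]

theorem X_mul_carryPoly (hc0 : c 0 = 0) :
    X * carryPoly k c = ∑ j ∈ range (k + 1), C (c j) * X ^ j := by
  rw [sum_range_succ', hc0, C_0, zero_mul, add_zero, carryPoly, mul_sum]
  exact sum_congr rfl fun j _ => by ring

theorem X_sq_mul_carryPoly (hc0 : c 0 = 0) :
    X ^ 2 * carryPoly k c =
      ∑ j ∈ range (k + 1), C (c (j - 1)) * X ^ j + C (c k) * X ^ (k + 1) := by
  rw [pow_two, mul_assoc, X_mul_carryPoly hc0, mul_sum,
    sum_range_succ' (fun j => C (c (j - 1)) * X ^ j)]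
  simp only [Nat.add_sub_cancel, Nat.zero_sub, hc0, C_0, zero_mul, add_zero]
  rw [sum_range_succ]
  exact congrArg₂ _ (sum_congr rfl fun j _ => by ring) (by ring)

theorem sum_C_mul_X_pow_eq_mul_carryPoly {a : ℕ → R} {p q r : R} (hc0 : c 0 = 0)
    (htop : c (k + 1) = 0) (hpk : p * c k = 0)
    (ha : ∀ j ≤ k, a j = p * c (j - 1) + q * c j + r * c (j + 1)) :
    ∑ j ∈ range (k + 1), C (a j) * X ^ j = (C p * X ^ 2 + C q * X + C r) * carryPoly k c := by
  have hsum : ∑ j ∈ range (k + 1), C (a j) * X ^ j =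
      C p * ∑ j ∈ range (k + 1), C (c (j - 1)) * X ^ j +
        C q * ∑ j ∈ range (k + 1), C (c j) * X ^ j +
        C r * ∑ j ∈ range (k + 1), C (c (j + 1)) * X ^ j := by
    simp only [mul_sum, ← sum_add_distrib]
    refine sum_congr rfl fun j hj => ?_
    rw [ha j (Nat.lt_succ_iff.mp (mem_range.mp hj))]
    simp only [map_add, map_mul]
    ring
  have hpk' : C p * C (c k) = 0 := by rw [← C_mul, hpk, C_0]
  rw [hsum, ← X_mul_carryPoly hc0, ← carryPoly_eq_sum_range_succ htop]
  linear_combination -C p * X_sq_mul_carryPoly (k := k) hc0 - X ^ (k + 1) * hpk'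

theorem coeff_carryPoly_zero (hk : 1 ≤ k) : (carryPoly k c).coeff 0 = c 1 := by
  simp [carryPoly, Nat.one_le_iff_ne_zero.mp hk]

end CarryPoly

/-- Gauss's lemma: the quadratic factor is primitive because its linear coefficient is `-1`. -/
theorem dvd_carry_one_of_C_mul_eq {R : Type*} [CommRing R] [StrongNormalizedGCDMonoid R]
    {k : ℕ} (hk : 1 ≤ k) {c : ℕ → R} {r m s : R} {P : R[X]}
    (h : C r * P = (C m * X ^ 2 - X + C s) * carryPoly k c) : r ∣ c 1 := by
  have hprim : (C m * X ^ 2 - X + C s).IsPrimitive := by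
    refine isPrimitive_iff_isUnit_of_C_dvd.mpr fun u hu => isUnit_of_dvd_one ?_
    simpa only [coeff_add, coeff_sub, coeff_C_mul, coeff_X_pow, coeff_X_one, coeff_C,
      OfNat.one_ne_ofNat, one_ne_zero, if_false, mul_zero, zero_sub, add_zero, dvd_neg] using
      (C_dvd_iff_dvd_coeff u _).mp hu 1
  have := (C_dvd_iff_dvd_coeff r _).mp (hprim.C_dvd_of_C_dvd_mul (Dvd.intro P h)) 0
  rwa [coeff_carryPoly_zero hk] at this

section Palintiple

variable {n b : ℤ} {k : ℕ} {d c : ℕ → ℤ}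

theorem IsPalintiple.carry_succ_eq_zero (hp : IsPalintiple n b k d)
    (hc : IsCarries n b k d c) : c (k + 1) = 0 := by
  obtain ⟨hn, hnb, -, -, -, -, hsum⟩ := hp
  have htel : ∑ j ∈ range (k + 1), (c (j + 1) * b ^ (j + 1) - c j * b ^ j) =
      n * ∑ j ∈ range (k + 1), d (k - j) * b ^ j - ∑ j ∈ range (k + 1), d j * b ^ j := by
    rw [mul_sum, ← sum_sub_distrib]
    refine sum_congr rfl fun j hj => ?_
    linear_combination -b ^ j * hc.2 j (Nat.lt_succ_iff.mp (mem_range.mp hj))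
  rw [sum_range_sub (fun j => c j * b ^ j), hc.1, hsum, sub_self, zero_mul, sub_zero] at htel
  exact (mul_eq_zero.mp htel).resolve_right (pow_ne_zero _ (by omega))

theorem IsCarries.palinomial_eq (hc : IsCarries n b k d c) (htop : c (k + 1) = 0) :
    palinomial n k d = (X - C b) * carryPoly k c := by
  rw [palinomial, sum_C_mul_X_pow_eq_mul_carryPoly (p := 0) (q := 1) (r := -b) hc.1 htop
    (zero_mul _) fun j hj => by linear_combination -hc.2 j hj]
  simp only [C_0, C_1, C_neg]
  ring

/-- Adding `n` times the carry relation at `j` to the one at `k - j` eliminates `d j`. -/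
theorem IsCarries.sq_sub_one_mul_digit (hc : IsCarries n b k d c) {j : ℕ} (hj : j ≤ k) :
    (n ^ 2 - 1) * d (k - j) =
      b * c (k - j + 1) - n * c j - c (k - j) + n * b * c (j + 1) := by
  have hrefl := hc.2 (k - j) (Nat.sub_le k j)
  rw [Nat.sub_sub_self hj] at hrefl
  linear_combination n * hc.2 j hj + hrefl

theorem IsSym.carry_self_eq_zero (hs : IsSym k c) (hc0 : c 0 = 0) : c k = 0 := by
  rw [hs k le_rfl, Nat.sub_self, hc0]

theorem IsSym.digit_last_eq (hp : IsPalintiple n b k d) (hc : IsCarries n b k d c)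
    (hs : IsSym k c) : d k = n * d 0 := by
  have h := hc.2 k le_rfl
  rw [Nat.sub_self, hs.carry_self_eq_zero hc.1, hp.carry_succ_eq_zero hc] at h
  linarith

theorem IsSym.sq_sub_one_mul_revDigitPoly (hs : IsSym k c) (hc : IsCarries n b k d c)
    (htop : c (k + 1) = 0) :
    C (n ^ 2 - 1) * revDigitPoly k d =
      (C b * X ^ 2 - C (n + 1) * X + C (n * b)) * carryPoly k c := by
  have hprev : ∀ j ≤ k, c (k - j + 1) = c (j - 1) := by
    intro j hj
    rcases j with _ | j
    · rw [Nat.sub_zero, htop, Nat.zero_sub, hc.1]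
    · rw [hs (k - (j + 1) + 1) (by omega), show k - (k - (j + 1) + 1) = j by omega,
        Nat.add_sub_cancel]
  rw [revDigitPoly, mul_sum]
  simp only [← mul_assoc, ← C_mul]
  rw [sum_C_mul_X_pow_eq_mul_carryPoly (p := b) (q := -(n + 1)) (r := n * b) hc.1 htop
    (by rw [hs.carry_self_eq_zero hc.1, mul_zero]) fun j hj => ?_]
  · simp only [C_neg]
    ring
  · rw [hc.sq_sub_one_mul_digit hj, hprev j hj, ← hs j hj]
    ring

theorem IsShiftedSym.sq_sub_one_mul_revDigitPoly (hs : IsShiftedSym k c)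
    (hc : IsCarries n b k d c) (htop : c (k + 1) = 0) :
    C (n ^ 2 - 1) * revDigitPoly k d = (C (b - n) * X + C (n * b - 1)) * carryPoly k c := by
  rw [revDigitPoly, mul_sum]
  simp only [← mul_assoc, ← C_mul]
  rw [sum_C_mul_X_pow_eq_mul_carryPoly (p := 0) (q := b - n) (r := n * b - 1) hc.1 htop
    (zero_mul _) fun j hj => ?_]
  · simp only [C_0]
    ring
  · have hnext : c (k - j) = c (j + 1) := by
      rw [hs (k - j) (Nat.sub_le k j), Nat.sub_sub_self hj]
    rw [hc.sq_sub_one_mul_digit hj, hnext, ← hs j hj]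
    ring

theorem IsSym.sub_one_mul_revDigitPoly_of_eq_mul (hs : IsSym k c) (hc : IsCarries n b k d c)
    (htop : c (k + 1) = 0) (hn : n + 1 ≠ 0) {m : ℤ} (hb : b = (n + 1) * m) :
    C (n - 1) * revDigitPoly k d = (C m * X ^ 2 - X + C (n * m)) * carryPoly k c := by
  refine mul_left_cancel₀ (C_ne_zero.mpr hn) ?_
  have h := hs.sq_sub_one_mul_revDigitPoly hc htop
  rw [hb] at h
  simp only [map_mul, map_sub, map_add, map_pow, map_one] at h ⊢
  linear_combination h

theorem IsSym.eq_digit_zero_of_eq_mul (hp : IsPalintiple n b k d) (hc : IsCarries n b k d c) (hs : IsSym k c)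
    {m : ℤ} (hb : b = (n + 1) * m) : m = d 0 := by
  have htop := hp.carry_succ_eq_zero hc
  have hdk := hs.digit_last_eq hp hc
  obtain ⟨hn, hnb, hk, hd, -, hd0, -⟩ := hp
  have hc1 : m * c 1 = (n - 1) * d 0 := by
    have h := hc.2 0 (Nat.zero_le k)
    rw [Nat.sub_zero, hc.1, hdk, hb] at h
    refine mul_left_cancel₀ (show n + 1 ≠ 0 by omega) ?_
    linear_combination -h
  have hdvd : n - 1 ∣ c 1 := dvd_carry_one_of_C_mul_eq hk
    (hs.sub_one_mul_revDigitPoly_of_eq_mul hc htop (by omega) hb)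
  have hd0pos : 0 < d 0 := lt_of_le_of_ne (hd 0 (Nat.zero_le k)).1 (Ne.symm hd0)
  have hdkle : d k ≤ b - 1 := (hd k le_rfl).2
  have hmpos : 0 < m := by nlinarith
  have hc1pos : 0 < c 1 := by nlinarith
  have hc1eq : c 1 = n - 1 := le_antisymm (by nlinarith) (Int.le_of_dvd hc1pos hdvd)
  rw [hc1eq] at hc1
  exact mul_right_cancel₀ (show n - 1 ≠ 0 by omega) (by linarith)

theorem IsSym.sub_one_mul_revDigitPoly (hp : IsPalintiple n b k d) (hc : IsCarries n b k d c)
    (hs : IsSym k c) (hb : n + 1 ∣ b) :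
    C (n - 1) * revDigitPoly k d = (C (d 0) * X ^ 2 - X + C (d k)) * carryPoly k c := by
  obtain ⟨m, hm⟩ := hb
  rw [hs.digit_last_eq hp hc, ← hs.eq_digit_zero_of_eq_mul hp hc hm]
  exact hs.sub_one_mul_revDigitPoly_of_eq_mul hc (hp.carry_succ_eq_zero hc)
    (by linarith [hp.1]) hm

theorem IsShiftedSym.carry_mul_revDigitPoly (hp : IsPalintiple n b k d)
    (hc : IsCarries n b k d c) (hs : IsShiftedSym k c) :
    C (c k) * revDigitPoly k d = (C (d 0) * X + C (d k)) * carryPoly k c := by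
  have htop := hp.carry_succ_eq_zero hc
  have hck : c k = c 1 := by rw [hs k le_rfl, Nat.sub_self]
  have hd0 : (n ^ 2 - 1) * d 0 = (b - n) * c k := by
    have h := hc.sq_sub_one_mul_digit (le_refl k)
    rw [Nat.sub_self, zero_add, hc.1, htop, ← hck] at h
    linear_combination h
  have hdk : (n ^ 2 - 1) * d k = (n * b - 1) * c k := by
    have h := hc.sq_sub_one_mul_digit (Nat.zero_le k)
    rw [Nat.sub_zero, htop, hc.1, zero_add, ← hck] at h
    linear_combination h
  have hn : (n ^ 2 - 1 : ℤ) ≠ 0 := by nlinarith [hp.1]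
  refine mul_left_cancel₀ (C_ne_zero.mpr hn) ?_
  have h := hs.sq_sub_one_mul_revDigitPoly hc htop
  have hd0' := congrArg C hd0
  have hdk' := congrArg C hdk
  simp only [map_mul, map_sub, map_pow, map_one] at h hd0' hdk' ⊢
  linear_combination C (c k) * h - X * carryPoly k c * hd0' - carryPoly k c * hdk'

end Palintiple

def IsRhoDerived (k : ℕ) (d : ℕ → ℤ) (kh : ℕ) (ch : ℕ → ℤ) : Prop :=
  (kh = k + 1 ∧ ch 0 = 0 ∧ (∀ j, 1 ≤ j → j ≤ k + 1 → ch j = d (k + 1 - j))) ∨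
    (kh = k + 2 ∧ ch 0 = 0 ∧ (∀ j, 1 ≤ j → j ≤ k + 1 → ch j = d (k + 1 - j)) ∧
      ch (k + 2) = 0)

theorem IsRhoDerived.carryPoly_eq {k kh : ℕ} {d ch : ℕ → ℤ} (h : IsRhoDerived k d kh ch) :
    carryPoly kh ch = revDigitPoly k d := by
  have hsum (hval : ∀ j, 1 ≤ j → j ≤ k + 1 → ch j = d (k + 1 - j)) :
      carryPoly (k + 1) ch = revDigitPoly k d :=
    sum_congr rfl fun j hj => by
      rw [hval (j + 1) (by omega) (by simp at hj; omega), Nat.add_sub_add_right]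
  rcases h with ⟨rfl, -, hval⟩ | ⟨rfl, -, hval, htop⟩
  · exact hsum hval
  · exact (carryPoly_eq_sum_range_succ htop).symm.trans (hsum hval)

/-- **Corollary.** The palinomial of a singly-ρ- or doubly-ρ-derived palintiple `p̂`
(carry sequence `(d 0, ..., d k, 0)` resp. `(0, d 0, ..., d k, 0)`) factors through
the palinomial of the original palintiple `p`. -/
theorem rho_derived_palinomial_factorization (n b : ℤ) (k : ℕ) (d c : ℕ → ℤ)
    (hp : IsPalintiple n b k d) (hc : IsCarries n b k d c)
    (nh bh : ℤ) (kh : ℕ) (dh ch : ℕ → ℤ)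
    (hph : IsPalintiple nh bh kh dh) (hch : IsCarries nh bh kh dh ch)
    (hder :
      (kh = k + 1 ∧ ch 0 = 0 ∧ (∀ j, 1 ≤ j → j ≤ k + 1 → ch j = d (k + 1 - j))) ∨
      (kh = k + 2 ∧ ch 0 = 0 ∧ (∀ j, 1 ≤ j → j ≤ k + 1 → ch j = d (k + 1 - j)) ∧
        ch (k + 2) = 0)) :
    (IsSym k c ∧ n + 1 ∣ b →
      C (n - 1) * (X - C b) * palinomial nh kh dh =
        (X - C bh) * (C (d 0) * X ^ 2 - X + C (d k)) * palinomial n k d) ∧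
    (IsShiftedSym k c →
      C (c k) * (X - C b) * palinomial nh kh dh =
        (X - C bh) * (C (d 0) * X + C (d k)) * palinomial n k d) := by
  have hpal := hc.palinomial_eq (hp.carry_succ_eq_zero hc)
  have hpalh : palinomial nh kh dh = (X - C bh) * revDigitPoly k d := by
    rw [hch.palinomial_eq (hph.carry_succ_eq_zero hch), IsRhoDerived.carryPoly_eq hder]
  refine ⟨fun ⟨hs, hb⟩ => ?_, fun hs => ?_⟩
  · rw [hpal, hpalh]
    linear_combination (X - C b) * (X - C bh) * hs.sub_one_mul_revDigitPoly hp hc hb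
  · rw [hpal, hpalh]
    linear_combination (X - C b) * (X - C bh) * hs.carry_mul_revDigitPoly hp hc
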